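/- For every admissible subset A of C^{2,3} there exists a compatible total order on A ∩ T, where T is the set of transpositions. -/

import Mathlib

/-! Call `k` an R-gap of `A` if some `R_{i,j,k} ∈ A` has `T_{i,k} ∉ A`. An R-gap `k` never also
tops an `L_{i,j,k} ∈ A` with `T_{i,k} ∉ A`: lowering the bottom index of one cycle to that of the
other (in Bruhat order `R_{i',j,k} ≤ R_{i,j,k}` for `i ≤ i'`, and `T_{a,k} ≤ T_{j,k} ≤ R_{i,j,k}`
for `j ≤ a`, and likewise for `L`), the axiom `R_{i,j,l}, L_{i,k,l} ∈ A ⇒ T_{i,l} ∈ A` puts the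
missing transposition back into `A`. So one sign per top index `k` fixes every requirement on
`T_{i,j}, T_{i,k}, T_{j,k}` for `i < j < k`: increasing if `k` is an R-gap, decreasing otherwise.
Ordering `T_{a,b}` lexicographically by `(b, a)` when `b` is an R-gap and by `(-b, -a)` otherwise
meets them all. -/

namespace SmoothPerm

variable {n : ℕ}

/-- Bruhat order on `S_n`, via the standard counting criterion. -/
def bruhatLE (τ σ : Equiv.Perm (Fin n)) : Prop :=
  ∀ i j : Fin n,
    (Finset.univ.filter (fun x => x ≤ i ∧ σ x ≤ j)).card ≤
      (Finset.univ.filter (fun x => x ≤ i ∧ τ x ≤ j)).card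

/-- Number of inversions (the length ℓ(σ)). -/
def invNum (σ : Equiv.Perm (Fin n)) : ℕ :=
  (Finset.univ.filter (fun p : Fin n × Fin n => p.1 < p.2 ∧ σ p.2 < σ p.1)).card

def isTransposition (τ : Equiv.Perm (Fin n)) : Prop :=
  ∃ i j : Fin n, i < j ∧ τ = Equiv.swap i j

/-- σ is smooth iff ℓ(σ) equals the number of transpositions Bruhat-below σ. -/
def smooth (σ : Equiv.Perm (Fin n)) : Prop :=
  invNum σ = Nat.card {τ : Equiv.Perm (Fin n) // isTransposition τ ∧ bruhatLE τ σ}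

def avoids4231 (σ : Equiv.Perm (Fin n)) : Prop :=
  ¬ ∃ a b c d : Fin n, a < b ∧ b < c ∧ c < d ∧ σ d < σ b ∧ σ b < σ c ∧ σ c < σ a

/-- covexillary = 3412-avoiding. -/
def covexillary (σ : Equiv.Perm (Fin n)) : Prop :=
  ¬ ∃ a b c d : Fin n, a < b ∧ b < c ∧ c < d ∧ σ c < σ d ∧ σ d < σ a ∧ σ a < σ b

def avoids321 (σ : Equiv.Perm (Fin n)) : Prop :=
  ¬ ∃ a b c : Fin n, a < b ∧ b < c ∧ σ c < σ b ∧ σ b < σ a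

/-- The 3-cycle i ↦ j ↦ k ↦ i. -/
def Rc (i j k : Fin n) : Equiv.Perm (Fin n) := Equiv.swap i k * Equiv.swap i j

def Lc (i j k : Fin n) : Equiv.Perm (Fin n) := (Rc i j k)⁻¹

def inC23 (τ : Equiv.Perm (Fin n)) : Prop :=
  isTransposition τ ∨ ∃ i j k : Fin n, i < j ∧ j < k ∧ (τ = Rc i j k ∨ τ = Lc i j k)

/-- The 2-3-table of σ. -/
def Ctab (σ : Equiv.Perm (Fin n)) : Set (Equiv.Perm (Fin n)) :=
  {τ | inC23 τ ∧ bruhatLE τ σ}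

def admissible (A : Set (Equiv.Perm (Fin n))) : Prop :=
  (∀ τ ∈ A, inC23 τ) ∧
  (∀ σ ∈ A, ∀ τ : Equiv.Perm (Fin n), inC23 τ → bruhatLE τ σ → τ ∈ A) ∧
  (∀ i j k l : Fin n, i < j → j < l → i < k → k < l →
    Rc i j l ∈ A → Lc i k l ∈ A → Equiv.swap i l ∈ A) ∧
  (∀ i j k : Fin n, i < j → j < k →
    Equiv.swap i j ∈ A → Equiv.swap j k ∈ A → (Rc i j k ∈ A ∨ Lc i j k ∈ A))

def isWedge (A : Set (Equiv.Perm (Fin n))) (i j : Fin n) : Prop :=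
  i < j ∧ Equiv.swap i j ∈ A ∧
  (∀ i' : Fin n, (i' : ℕ) + 1 = (i : ℕ) → Equiv.swap i' i ∉ A) ∧
  (∀ j' : Fin n, (j : ℕ) + 1 = (j' : ℕ) → Rc i j j' ∉ A)

def derivedSet (A : Set (Equiv.Perm (Fin n))) (i j : Fin n) : Set (Equiv.Perm (Fin n)) :=
  A \ ({Equiv.swap i j} ∪ {τ | ∃ k, j < k ∧ τ = Lc i j k} ∪
       {τ | ∃ k, i < k ∧ k < j ∧ τ = Rc i k j})

def strictTotalOn (S : Set (Equiv.Perm (Fin n)))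
    (r : Equiv.Perm (Fin n) → Equiv.Perm (Fin n) → Prop) : Prop :=
  (∀ x ∈ S, ¬ r x x) ∧
  (∀ x ∈ S, ∀ y ∈ S, ∀ z ∈ S, r x y → r y z → r x z) ∧
  (∀ x ∈ S, ∀ y ∈ S, x ≠ y → r x y ∨ r y x)

def compatibleOrder (A : Set (Equiv.Perm (Fin n)))
    (r : Equiv.Perm (Fin n) → Equiv.Perm (Fin n) → Prop) : Prop :=
  (∀ i j k : Fin n, i < j → j < k → Rc i j k ∈ A → Lc i j k ∉ A →
    r (Equiv.swap i j) (Equiv.swap j k)) ∧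
  (∀ i j k : Fin n, i < j → j < k → Lc i j k ∈ A → Rc i j k ∉ A →
    r (Equiv.swap j k) (Equiv.swap i j)) ∧
  (∀ i j k : Fin n, i < j → j < k → Equiv.swap i k ∈ A →
    ((r (Equiv.swap i j) (Equiv.swap i k) ∧ r (Equiv.swap i k) (Equiv.swap j k)) ∨
     (r (Equiv.swap j k) (Equiv.swap i k) ∧ r (Equiv.swap i k) (Equiv.swap i j))))

def coversIn (S : Set (Equiv.Perm (Fin n)))
    (r : Equiv.Perm (Fin n) → Equiv.Perm (Fin n) → Prop)
    (x y : Equiv.Perm (Fin n)) : Prop :=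
  x ∈ S ∧ y ∈ S ∧ r x y ∧ ∀ z ∈ S, ¬ (r x z ∧ r z y)

/-- m_σ(i) = max σ([i]). -/
def maxS (σ : Equiv.Perm (Fin n)) (i : Fin n) : Fin n :=
  ((Finset.univ.filter (fun x => x ≤ i)).image (fun x => σ x)).max'
    ⟨σ i, Finset.mem_image_of_mem _ (by simp)⟩

/-- The cyclic shift i → i+1 → ⋯ → j → i. -/
def Rseg (i j : Fin n) : Equiv.Perm (Fin n) :=
  ((List.finRange n).filter (fun x => decide (i ≤ x ∧ x ≤ j))).formPerm

def definedByInclusions (σ : Equiv.Perm (Fin n)) : Prop :=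
  ∀ τ : Equiv.Perm (Fin n),
    (∀ x, maxS τ x ≤ maxS σ x) → (∀ x, maxS τ⁻¹ x ≤ maxS σ⁻¹ x) → bruhatLE τ σ

open Equiv

lemma bruhatLE_refl (σ : Perm (Fin n)) : bruhatLE σ σ := fun _ _ => le_rfl

lemma bruhatLE_trans {ρ σ τ : Perm (Fin n)} (h₁ : bruhatLE ρ σ) (h₂ : bruhatLE σ τ) :
    bruhatLE ρ τ := fun i j => (h₂ i j).trans (h₁ i j)

lemma card_filter_le_inv_le (σ : Perm (Fin n)) (i j : Fin n) :
    (Finset.univ.filter (fun x => x ≤ i ∧ σ⁻¹ x ≤ j)).card =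
      (Finset.univ.filter (fun x => x ≤ j ∧ σ x ≤ i)).card := by
  refine Finset.card_bij (fun x _ => σ⁻¹ x) ?_ (fun _ _ _ _ h => σ⁻¹.injective h) ?_
  · intro x hx
    simp only [Finset.mem_filter, Finset.mem_univ, true_and] at hx ⊢
    exact ⟨hx.2, by simpa using hx.1⟩
  · intro y hy
    simp only [Finset.mem_filter, Finset.mem_univ, true_and] at hy
    exact ⟨σ y, by simp [hy.1, hy.2], by simp⟩

lemma bruhatLE_inv {σ τ : Perm (Fin n)} (h : bruhatLE σ τ) : bruhatLE σ⁻¹ τ⁻¹ := by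
  intro i j
  rw [card_filter_le_inv_le, card_filter_le_inv_le]
  exact h j i

lemma bruhatLE_mul_swap (σ : Perm (Fin n)) {c d : Fin n} (hcd : c < d) (h : σ c < σ d) :
    bruhatLE σ (σ * swap c d) := by
  intro i j
  -- `d` is the only point that can leave the count, and then `c` enters it
  refine Finset.card_le_card_of_injOn (fun x => if x = d ∧ j < σ d then c else x) ?_ ?_
  · intro x hx
    rw [Finset.mem_coe, Finset.mem_filter] at hx ⊢
    simp only [Finset.mem_univ, true_and, Perm.mul_apply, swap_apply_def] at hx ⊢
    split_ifs at hx ⊢ <;> grind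
  · intro x hx y hy hxy
    rw [Finset.mem_coe, Finset.mem_filter] at hx hy
    simp only [Finset.mem_univ, true_and, Perm.mul_apply, swap_apply_def] at hx hy hxy
    split_ifs at hx hy hxy <;> grind

lemma bruhatLE_swap_mul (σ : Perm (Fin n)) {c d : Fin n} (hcd : c < d) (h : σ⁻¹ c < σ⁻¹ d) :
    bruhatLE σ (swap c d * σ) := by
  simpa [mul_inv_rev, swap_inv] using bruhatLE_inv (bruhatLE_mul_swap σ⁻¹ hcd h)

lemma Rc_eq_swap_mul_swap {i j k : Fin n} (hij : i < j) (hjk : j < k) :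
    Rc i j k = swap i j * swap j k := by
  ext x
  simp only [Rc, Perm.mul_apply, swap_apply_def]
  split_ifs <;> grind

lemma Lc_eq_swap_mul_swap {i j k : Fin n} (hij : i < j) (hjk : j < k) :
    Lc i j k = swap i k * swap j k := by
  ext x
  simp only [Lc, Rc, mul_inv_rev, swap_inv, Perm.mul_apply, swap_apply_def]
  split_ifs <;> grind

lemma Rc_mul_swap (i j k : Fin n) : Rc i j k * swap i j = swap i k := by
  simp [Rc, mul_assoc]

lemma Lc_mul_swap {i j k : Fin n} (hij : i < j) (hjk : j < k) :
    Lc i j k * swap j k = swap i k := by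
  simp [Lc_eq_swap_mul_swap hij hjk, mul_assoc]

lemma swap_mul_Rc_mul_swap {i d j l : Fin n} (hid : i < d) (hdj : d < j) (hjl : j < l) :
    swap i d * (Rc d j l * swap i d) = Rc i j l := by
  ext x
  simp only [Rc, Perm.mul_apply, swap_apply_def]
  split_ifs <;> grind

lemma swap_bruhatLE_Rc {i j k : Fin n} (hij : i < j) (hjk : j < k) :
    bruhatLE (swap j k) (Rc i j k) := by
  rw [Rc_eq_swap_mul_swap hij hjk]
  refine bruhatLE_swap_mul _ hij ?_
  simp only [swap_inv, swap_apply_def]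
  split_ifs <;> grind

lemma swap_bruhatLE_Lc {i j k : Fin n} (hij : i < j) (hjk : j < k) :
    bruhatLE (swap j k) (Lc i j k) := by
  rw [Lc_eq_swap_mul_swap hij hjk]
  refine bruhatLE_swap_mul _ (hij.trans hjk) ?_
  simp only [swap_inv, swap_apply_def]
  split_ifs <;> grind

lemma Rc_bruhatLE_swap {i j k : Fin n} (hij : i < j) (hjk : j < k) :
    bruhatLE (Rc i j k) (swap i k) := by
  rw [← Rc_mul_swap i j k]
  refine bruhatLE_mul_swap _ hij ?_
  simp only [Rc, Perm.mul_apply, swap_apply_def]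
  split_ifs <;> grind

lemma Lc_bruhatLE_swap {i j k : Fin n} (hij : i < j) (hjk : j < k) :
    bruhatLE (Lc i j k) (swap i k) := by
  rw [← Lc_mul_swap hij hjk]
  refine bruhatLE_mul_swap _ hjk ?_
  simp only [Lc_eq_swap_mul_swap hij hjk, Perm.mul_apply, swap_apply_def]
  split_ifs <;> grind

lemma Rc_bruhatLE_Rc {i d j l : Fin n} (hid : i ≤ d) (hdj : d < j) (hjl : j < l) :
    bruhatLE (Rc d j l) (Rc i j l) := by
  rcases hid.eq_or_lt with rfl | hid
  · exact bruhatLE_refl _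
  rw [← swap_mul_Rc_mul_swap hid hdj hjl]
  refine bruhatLE_trans (bruhatLE_mul_swap _ hid ?_) (bruhatLE_swap_mul _ hid ?_)
  · simp only [Rc, Perm.mul_apply, swap_apply_def]
    split_ifs <;> grind
  · simp only [Rc, mul_inv_rev, swap_inv, Perm.mul_apply, swap_apply_def]
    split_ifs <;> grind

lemma Lc_bruhatLE_Lc {i d j l : Fin n} (hid : i ≤ d) (hdj : d < j) (hjl : j < l) :
    bruhatLE (Lc d j l) (Lc i j l) :=
  bruhatLE_inv (Rc_bruhatLE_Rc hid hdj hjl)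

lemma swap_bruhatLE_swap {j a k : Fin n} (hja : j ≤ a) (hak : a < k) :
    bruhatLE (swap a k) (swap j k) := by
  rcases hja.eq_or_lt with rfl | hja
  · exact bruhatLE_refl _
  exact bruhatLE_trans (swap_bruhatLE_Lc hja hak) (Lc_bruhatLE_swap hja hak)

lemma inC23_swap {a b : Fin n} (hab : a < b) : inC23 (swap a b) :=
  Or.inl ⟨a, b, hab, rfl⟩

lemma inC23_Rc {i j k : Fin n} (hij : i < j) (hjk : j < k) : inC23 (Rc i j k) :=
  Or.inr ⟨i, j, k, hij, hjk, Or.inl rfl⟩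

lemma inC23_Lc {i j k : Fin n} (hij : i < j) (hjk : j < k) : inC23 (Lc i j k) :=
  Or.inr ⟨i, j, k, hij, hjk, Or.inr rfl⟩

def HasRGapAt (A : Set (Perm (Fin n))) (k : Fin n) : Prop :=
  ∃ i j : Fin n, i < j ∧ j < k ∧ Rc i j k ∈ A ∧ swap i k ∉ A

section Admissible

variable {A : Set (Perm (Fin n))}

lemma swap_mem_of_Lc_mem_of_Rc_mem (hA : admissible A) {i j i' j' k : Fin n}
    (hii' : i ≤ i') (hij : i < j) (hjk : j < k) (hi'j' : i' < j') (hj'k : j' < k)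
    (hL : Lc i j k ∈ A) (hR : Rc i' j' k ∈ A) : swap i' k ∈ A := by
  have hi'k := hi'j'.trans hj'k
  rcases lt_or_ge i' j with hi'j | hji'
  · have hL' : Lc i' j k ∈ A := hA.2.1 _ hL _ (inC23_Lc hi'j hjk) (Lc_bruhatLE_Lc hii' hi'j hjk)
    exact hA.2.2.1 i' j' j k hi'j' hj'k hi'j hjk hR hL'
  · have hT : swap j k ∈ A := hA.2.1 _ hL _ (inC23_swap hjk) (swap_bruhatLE_Lc hij hjk)
    exact hA.2.1 _ hT _ (inC23_swap hi'k) (swap_bruhatLE_swap hji' hi'k)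

lemma swap_mem_of_Rc_mem_of_Lc_mem (hA : admissible A) {i j i' j' k : Fin n}
    (hi'i : i' ≤ i) (hij : i < j) (hjk : j < k) (hi'j' : i' < j') (hj'k : j' < k)
    (hL : Lc i j k ∈ A) (hR : Rc i' j' k ∈ A) : swap i k ∈ A := by
  have hik := hij.trans hjk
  rcases lt_or_ge i j' with hij' | hj'i
  · have hR' : Rc i j' k ∈ A := hA.2.1 _ hR _ (inC23_Rc hij' hj'k) (Rc_bruhatLE_Rc hi'i hij' hj'k)
    exact hA.2.2.1 i j' j k hij' hj'k hij hjk hR' hL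
  · have hT : swap j' k ∈ A := hA.2.1 _ hR _ (inC23_swap hj'k) (swap_bruhatLE_Rc hi'j' hj'k)
    exact hA.2.1 _ hT _ (inC23_swap hik) (swap_bruhatLE_swap hj'i hik)

lemma hasRGapAt_of_Rc_mem_of_Lc_not_mem (hA : admissible A) {i j k : Fin n}
    (hij : i < j) (hjk : j < k) (hR : Rc i j k ∈ A) (hL : Lc i j k ∉ A) : HasRGapAt A k :=
  ⟨i, j, hij, hjk, hR, fun hT => hL (hA.2.1 _ hT _ (inC23_Lc hij hjk) (Lc_bruhatLE_swap hij hjk))⟩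

lemma not_hasRGapAt_of_Lc_mem_of_Rc_not_mem (hA : admissible A) {i j k : Fin n}
    (hij : i < j) (hjk : j < k) (hL : Lc i j k ∈ A) (hR : Rc i j k ∉ A) : ¬ HasRGapAt A k := by
  have hT : swap i k ∉ A := fun hT =>
    hR (hA.2.1 _ hT _ (inC23_Rc hij hjk) (Rc_bruhatLE_swap hij hjk))
  rintro ⟨i', j', hi'j', hj'k, hR', hT'⟩
  rcases le_total i i' with hii' | hi'i
  · exact hT' (swap_mem_of_Lc_mem_of_Rc_mem hA hii' hij hjk hi'j' hj'k hL hR')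
  · exact hT (swap_mem_of_Rc_mem_of_Lc_mem hA hi'i hij hjk hi'j' hj'k hL hR')

end Admissible

lemma eq_and_eq_of_swap_eq_swap {α : Type*} [LinearOrder α] {a b c d : α} (hab : a < b)
    (hcd : c < d) (h : swap a b = swap c d) : a = c ∧ b = d := by
  have ha := congrArg (· a) h
  have hc := congrArg (· c) h
  simp only [swap_apply_def] at ha hc
  split_ifs at ha hc <;> grind

section SignedKey

def signedKey (p : Fin n → Prop) [DecidablePred p] (a b : Fin n) : ℤ ×ₗ ℤ :=
  if p b then toLex ((b : ℤ), (a : ℤ)) else toLex (-(b : ℤ), -(a : ℤ))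

def swapOrder (p : Fin n → Prop) [DecidablePred p] (x y : Perm (Fin n)) : Prop :=
  ∃ a b c d : Fin n, a < b ∧ c < d ∧ x = swap a b ∧ y = swap c d ∧
    signedKey p a b < signedKey p c d

variable {p : Fin n → Prop} [DecidablePred p]

lemma eq_and_eq_of_signedKey_eq {a b c d : Fin n} (h : signedKey p a b = signedKey p c d) :
    a = c ∧ b = d := by
  unfold signedKey at h
  split_ifs at h <;> simp only [toLex_inj, Prod.mk.injEq] at h <;> omega

lemma signedKey_lt_of_pos {i j k : Fin n} (hij : i < j) (hjk : j < k) (hk : p k) :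
    signedKey p i j < signedKey p i k ∧ signedKey p i k < signedKey p j k := by
  simp only [signedKey, hk, if_true]
  split_ifs <;> simp only [Prod.Lex.toLex_lt_toLex, true_and] <;> omega

lemma signedKey_lt_of_neg {i j k : Fin n} (hij : i < j) (hjk : j < k) (hk : ¬ p k) :
    signedKey p j k < signedKey p i k ∧ signedKey p i k < signedKey p i j := by
  simp only [signedKey, hk, if_false]
  split_ifs <;> simp only [Prod.Lex.toLex_lt_toLex, true_and] <;> omega

lemma swapOrder_swap_iff {a b c d : Fin n} (hab : a < b) (hcd : c < d) :
    swapOrder p (swap a b) (swap c d) ↔ signedKey p a b < signedKey p c d := by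
  refine ⟨?_, fun h => ⟨a, b, c, d, hab, hcd, rfl, rfl, h⟩⟩
  rintro ⟨a', b', c', d', ha'b', hc'd', hx, hy, h⟩
  obtain ⟨rfl, rfl⟩ := eq_and_eq_of_swap_eq_swap hab ha'b' hx
  obtain ⟨rfl, rfl⟩ := eq_and_eq_of_swap_eq_swap hcd hc'd' hy
  exact h

lemma strictTotalOn_swapOrder {S : Set (Perm (Fin n))} (hS : ∀ x ∈ S, isTransposition x) :
    strictTotalOn S (swapOrder p) := by
  refine ⟨?_, ?_, ?_⟩
  · intro x hx
    obtain ⟨a, b, hab, rfl⟩ := hS x hx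
    rw [swapOrder_swap_iff hab hab]
    exact lt_irrefl _
  · intro x hx y hy z hz
    obtain ⟨a, b, hab, rfl⟩ := hS x hx
    obtain ⟨c, d, hcd, rfl⟩ := hS y hy
    obtain ⟨e, f, hef, rfl⟩ := hS z hz
    rw [swapOrder_swap_iff hab hcd, swapOrder_swap_iff hcd hef, swapOrder_swap_iff hab hef]
    exact lt_trans
  · intro x hx y hy hxy
    obtain ⟨a, b, hab, rfl⟩ := hS x hx
    obtain ⟨c, d, hcd, rfl⟩ := hS y hy
    rw [swapOrder_swap_iff hab hcd, swapOrder_swap_iff hcd hab]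
    refine lt_or_gt_of_ne fun h => hxy ?_
    obtain ⟨rfl, rfl⟩ := eq_and_eq_of_signedKey_eq h
    rfl

end SignedKey

/-- existence of a compatible order. -/
theorem exists_compatible_order (n : ℕ) (A : Set (Equiv.Perm (Fin n)))
    (hA : admissible A) :
    ∃ r : Equiv.Perm (Fin n) → Equiv.Perm (Fin n) → Prop,
      strictTotalOn {τ | τ ∈ A ∧ isTransposition τ} r ∧ compatibleOrder A r := by
  classical
  refine ⟨swapOrder (HasRGapAt A), strictTotalOn_swapOrder fun _ hx => hx.2, ?_, ?_, ?_⟩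
  · intro i j k hij hjk hR hL
    have h := signedKey_lt_of_pos hij hjk (hasRGapAt_of_Rc_mem_of_Lc_not_mem hA hij hjk hR hL)
    exact (swapOrder_swap_iff hij hjk).2 (h.1.trans h.2)
  · intro i j k hij hjk hL hR
    have h := signedKey_lt_of_neg hij hjk (not_hasRGapAt_of_Lc_mem_of_Rc_not_mem hA hij hjk hL hR)
    exact (swapOrder_swap_iff hjk hij).2 (h.1.trans h.2)
  · intro i j k hij hjk _
    have hik := hij.trans hjk
    by_cases hk : HasRGapAt A k
    · have h := signedKey_lt_of_pos hij hjk hk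
      exact Or.inl ⟨(swapOrder_swap_iff hij hik).2 h.1, (swapOrder_swap_iff hik hjk).2 h.2⟩
    · have h := signedKey_lt_of_neg hij hjk hk
      exact Or.inr ⟨(swapOrder_swap_iff hjk hik).2 h.1, (swapOrder_swap_iff hik hij).2 h.2⟩

end SmoothPerm
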